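/- arXiv:1612.07500 — 4 statements merged into one kernel-verified Lean document; each statement's English description precedes it below -/
import Mathlib

section
/- Let p, q : ℝ → ℂ, let λ ∈ ℂ, and let Q(x) be the 4×4 complex companion matrix Q(x) = [[0,1,0,0],[0,0,1,0],[0,-2p(x),0,1],[λ-q(x),0,0,0]]. Let X : ℝ → Matrix (Fin 4) (Fin 4) ℂ satisfy, for every x ∈ ℝ, HasDerivAt X (Q(x)·X(x)) x, and suppose X(0) = 1 (the identity matrix). Then for every x ∈ ℝ one has X(x)ᵀ · J · X(x) = J; in particular every X(x) is invertible and X(x)⁻¹ = -J · X(x)ᵀ · J. -/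
/-!
Since `J * Q x` is symmetric and `Jᵀ = -J`, the companion matrix satisfies `(Q x)ᵀ J + J Q x = 0`.
Hence `(Xᵀ J X)' = Xᵀ (Qᵀ J + J Q) X = 0`, so `Xᵀ J X` keeps its value `J` at `0`. Multiplying
`Xᵀ J X = J` by `J` on the left and using `J² = -1` shows that `-J Xᵀ J` is a left inverse of `X`.
-/

open Matrix

attribute [local instance] Matrix.linftyOpNormedRing Matrix.linftyOpNormedSpace

noncomputable def Jmat : Matrix (Fin 4) (Fin 4) ℂ :=
  !![0, 0, 0, 1; 0, 0, -1, 0; 0, 1, 0, 0; -1, 0, 0, 0]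

attribute [local instance] Matrix.linftyOpNormedAlgebra

section Derivative

variable {𝕜 n : Type*} [RCLike 𝕜] [Fintype n] [DecidableEq n]

theorem HasDerivAt.matrix_transpose {X : ℝ → Matrix n n 𝕜} {X' : Matrix n n 𝕜} {x : ℝ}
    (hX : HasDerivAt X X' x) : HasDerivAt (fun y ↦ (X y)ᵀ) X'ᵀ x :=
  (transposeLinearEquiv n n ℝ 𝕜).toLinearMap.toContinuousLinearMap.hasFDerivAt.comp_hasDerivAt
    x hX

theorem HasDerivAt.transpose_mul_mul {X : ℝ → Matrix n n 𝕜} {A J : Matrix n n 𝕜} {x : ℝ}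
    (hX : HasDerivAt X (A * X x) x) :
    HasDerivAt (fun y ↦ (X y)ᵀ * J * X y) ((X x)ᵀ * (Aᵀ * J + J * A) * X x) x := by
  refine ((hX.matrix_transpose.mul_const J).mul hX).congr_deriv ?_
  rw [transpose_mul]
  noncomm_ring

theorem transpose_mul_mul_eq_of_hasDerivAt {A X : ℝ → Matrix n n 𝕜} {J : Matrix n n 𝕜}
    (hA : ∀ x, (A x)ᵀ * J + J * A x = 0) (hX : ∀ x, HasDerivAt X (A x * X x) x) (x y : ℝ) :
    (X x)ᵀ * J * X x = (X y)ᵀ * J * X y := by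
  have hderiv : ∀ x, HasDerivAt (fun y ↦ (X y)ᵀ * J * X y) 0 x := fun x ↦ by
    simpa [hA x] using (hX x).transpose_mul_mul (J := J)
  exact is_const_of_deriv_eq_zero (fun x ↦ (hderiv x).differentiableAt)
    (fun x ↦ (hderiv x).deriv) x y

end Derivative

theorem Matrix.neg_mul_transpose_mul_mul_eq_one {n R : Type*} [Fintype n] [DecidableEq n]
    [CommRing R] {J X : Matrix n n R} (hJ : J * J = -1) (hX : Xᵀ * J * X = J) :
    -(J * Xᵀ * J) * X = 1 := by
  calc -(J * Xᵀ * J) * X = -(J * (Xᵀ * J * X)) := by noncomm_ring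
    _ = 1 := by rw [hX, hJ, neg_neg]

theorem Jmat_mul_self : Jmat * Jmat = -1 := by
  ext i j
  fin_cases i <;> fin_cases j <;> simp [Jmat, mul_apply, Fin.sum_univ_succ, one_apply]

theorem companion_transpose_mul_Jmat_add_Jmat_mul (a b : ℂ) :
    (!![0, 1, 0, 0; 0, 0, 1, 0; 0, b, 0, 1; a, 0, 0, 0] : Matrix (Fin 4) (Fin 4) ℂ)ᵀ * Jmat +
      Jmat * !![0, 1, 0, 0; 0, 0, 1, 0; 0, b, 0, 1; a, 0, 0, 0] = 0 := by
  ext i j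
  fin_cases i <;> fin_cases j <;> simp [Jmat, mul_apply, Fin.sum_univ_succ]

/-- If `X : ℝ → Matrix (Fin 4) (Fin 4) ℂ` solves `X' = Q X` with the companion
matrix `Q(x) = [[0,1,0,0],[0,0,1,0],[0,-2p(x),0,1],[λ-q(x),0,0,0]]` of the equation
`y'''' + 2(py')' + qy = λy`, and `X(0) = 1`, then `X(x)ᵀ·J·X(x) = J` for all `x`;
in particular every `X(x)` is invertible with `X(x)⁻¹ = -J·X(x)ᵀ·J`. -/
theorem symplectic_identity_of_fundamental_matrix
    (p q : ℝ → ℂ) (lam : ℂ)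
    (Q : ℝ → Matrix (Fin 4) (Fin 4) ℂ)
    (hQ : ∀ x : ℝ, Q x =
      !![0, 1, 0, 0; 0, 0, 1, 0; 0, -2 * p x, 0, 1; lam - q x, 0, 0, 0])
    (X : ℝ → Matrix (Fin 4) (Fin 4) ℂ)
    (hX : ∀ x : ℝ, HasDerivAt X (Q x * X x) x)
    (hX0 : X 0 = 1) :
    ∀ x : ℝ, (X x)ᵀ * Jmat * X x = Jmat ∧ IsUnit (X x).det ∧
      (X x)⁻¹ = -(Jmat * (X x)ᵀ * Jmat) := by
  have hQJ : ∀ x, (Q x)ᵀ * Jmat + Jmat * Q x = 0 := fun x ↦ by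
    rw [hQ x]
    exact companion_transpose_mul_Jmat_add_Jmat_mul _ _
  have hJX : ∀ x, (X x)ᵀ * Jmat * X x = Jmat := fun x ↦ by
    simpa [hX0] using transpose_mul_mul_eq_of_hasDerivAt hQJ hX x 0
  intro x
  have hleft := neg_mul_transpose_mul_mul_eq_one Jmat_mul_self (hJX x)
  exact ⟨hJX x, isUnit_det_of_left_inverse hleft, inv_eq_left_inv hleft⟩
end

section
/- Let v, w : Fin 4 → ℂ be two vectors and for 1 ≤ j < ℓ ≤ 4 set Δ_{jℓ} = v_j w_ℓ - v_ℓ w_j. If Δ_{34} = 0, Δ_{24} = 0, and Δ_{14} + Δ_{23} = 0, then Δ_{14} = 0 and Δ_{23} = 0. -/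
/-- For the 2×2 minors `Δ_{jℓ} = v_j w_ℓ - v_ℓ w_j` of the 4×2 matrix with columns
`v, w`: if `Δ₃₄ = 0`, `Δ₂₄ = 0` and `Δ₁₄ + Δ₂₃ = 0`, then `Δ₁₄ = 0` and `Δ₂₃ = 0`.
(1-based indices `1,2,3,4` correspond to `0,1,2,3 : Fin 4`.) -/
theorem minors_vanish_of_pluecker (v w : Fin 4 → ℂ)
    (Δ : Fin 4 → Fin 4 → ℂ)
    (hΔ : ∀ j ℓ : Fin 4, Δ j ℓ = v j * w ℓ - v ℓ * w j)
    (h34 : Δ 2 3 = 0) (h24 : Δ 1 3 = 0) (h1423 : Δ 0 3 + Δ 1 2 = 0) :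
    Δ 0 3 = 0 ∧ Δ 1 2 = 0 := by
  have key : Δ 0 3 * Δ 1 2 = Δ 0 2 * Δ 1 3 - Δ 0 1 * Δ 2 3 := by
    simp only [hΔ]; ring
  rw [h34, h24] at key
  have h12 : Δ 1 2 = -Δ 0 3 := by linear_combination h1423
  have hsq : Δ 0 3 ^ 2 = 0 := by
    rw [h12] at key; linear_combination -key
  have h03 : Δ 0 3 = 0 := by
    exact pow_eq_zero_iff (n := 2) (by norm_num) |>.mp hsq
  exact ⟨h03, by rw [h12, h03, neg_zero]⟩
end

section
/- Let M be an invertible 4×4 complex matrix satisfying M⁻¹ = -J·Mᵀ·J, let k ∈ ℂ, γ ∈ ℝ, and i the imaginary unit. Define the vectors P = M⁻¹ · ((-k)^{ℓ-1} e^{-kγ})_{ℓ=1}^4 and S = M⁻¹ · ((ik)^{ℓ-1} e^{ikγ})_{ℓ=1}^4 in ℂ⁴, and for 1 ≤ j < ℓ ≤ 4 set Δ_{jℓ} = M_{j2}M_{ℓ4} - M_{ℓ2}M_{j4}. Then P₁S₃ - P₃S₁ = -k e^{(i-1)kγ} ( (1+i)Δ_{34} + 2k Δ_{24} + (1-i)k²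 (Δ_{14} + Δ_{23}) - 2ik³ Δ_{13} - (1+i)k⁴ Δ_{12} ). -/
open Matrix Complex

/-- The full algebraic content of the paper's Lemma 2.1: if `M` is an invertible
4×4 complex matrix with `M⁻¹ = -J·Mᵀ·J`, and
`P = M⁻¹·((-k)^{ℓ-1} e^{-kγ})_ℓ`, `S = M⁻¹·((ik)^{ℓ-1} e^{ikγ})_ℓ`, then with
`Δ_{jℓ} = M_{j2} M_{ℓ4} - M_{ℓ2} M_{j4}` one has
`P₁S₃ - P₃S₁ = -k e^{(i-1)kγ} ((1+i)Δ₃₄ + 2kΔ₂₄ + (1-i)k²(Δ₁₄+Δ₂₃) - 2ik³Δ₁₃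
  - (1+i)k⁴Δ₁₂)`. -/
theorem jost_function_halfline
    (M : Matrix (Fin 4) (Fin 4) ℂ) (hM : IsUnit M.det)
    (hsymp : M⁻¹ = -(Jmat * Mᵀ * Jmat)) (k : ℂ) (γ : ℝ)
    (P S : Fin 4 → ℂ)
    (hP : P = M⁻¹ *ᵥ fun ℓ : Fin 4 => (-k) ^ (ℓ : ℕ) * Complex.exp (-k * γ))
    (hS : S = M⁻¹ *ᵥ fun ℓ : Fin 4 => (I * k) ^ (ℓ : ℕ) * Complex.exp (I * k * γ))
    (Δ : Fin 4 → Fin 4 → ℂ)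
    (hΔ : ∀ j ℓ : Fin 4, Δ j ℓ = M j 1 * M ℓ 3 - M ℓ 1 * M j 3) :
    P 0 * S 2 - P 2 * S 0 =
      -k * Complex.exp ((I - 1) * k * γ) *
        ((1 + I) * Δ 2 3 + 2 * k * Δ 1 3 + (1 - I) * k ^ 2 * (Δ 0 3 + Δ 1 2)
          - 2 * I * k ^ 3 * Δ 0 2 - (1 + I) * k ^ 4 * Δ 0 1) := by
  have hexp : Complex.exp ((I - 1) * k * γ) =
      Complex.exp (I * k * γ) * Complex.exp (-k * γ) := by
    rw [← Complex.exp_add]; congr 1; ring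
  have hA : M⁻¹ = !![M 3 3, -M 2 3, M 1 3, -M 0 3; -M 3 2, M 2 2, -M 1 2, M 0 2;
      M 3 1, -M 2 1, M 1 1, -M 0 1; -M 3 0, M 2 0, -M 1 0, M 0 0] := by
    rw [hsymp]
    ext a b
    fin_cases a <;> fin_cases b <;>
      simp [Jmat, Matrix.mul_apply, Matrix.vecMul, Matrix.mulVec,
        dotProduct, Fin.sum_univ_four, Matrix.transpose_apply, Matrix.vecHead, Matrix.vecTail, Function.comp]
  subst hP hS
  rw [hA]
  simp only [hΔ, hexp, Matrix.mulVec, dotProduct, Fin.sum_univ_four,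
    Matrix.cons_val', Matrix.cons_val_zero, Matrix.cons_val_one, Matrix.head_cons,
    Matrix.empty_val', Matrix.cons_val_fin_one, Matrix.head_fin_const,
    Matrix.cons_val_two, Matrix.tail_cons, Matrix.cons_val_three, Matrix.of_apply,
    show ((0:Fin 4):ℕ) = 0 from rfl, show ((1:Fin 4):ℕ) = 1 from rfl,
    show ((2:Fin 4):ℕ) = 2 from rfl, show ((3:Fin 4):ℕ) = 3 from rfl,
    neg_mul, pow_zero, pow_one]
  linear_combination ((-1)*k^2*Complex.exp (Complex.I*k*(γ:ℂ))*Complex.exp (-(k*(γ:ℂ)))*M 1 3*M 3 1 + k^2*Complex.exp (Complex.I*k*(γ:ℂ))*Complex.exp (-(k*(γ:ℂ)))*M 1 1*M 3 3 + (-1)*k^3*Complex.exp (Complex.I*k*(γ:ℂ))*Complex.exp (-(k*(γ:ℂ)))*M 1 3*M 2 1 + k^3*Complex.exp (Complex.I*k*(γ:ℂ))*Complex.exp (-(k*(γ:ℂ)))*M 1 1*M 2 3 + k^3*Complex.exp (Complex.I*k*(γ:ℂ))*Complex.exp (-(k*(γ:ℂ)))*Complex.I*M 0 3*M 3 1 +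 (-1)*k^3*Complex.exp (Complex.I*k*(γ:ℂ))*Complex.exp (-(k*(γ:ℂ)))*Complex.I*M 0 1*M 3 3 + k^4*Complex.exp (Complex.I*k*(γ:ℂ))*Complex.exp (-(k*(γ:ℂ)))*Complex.I*M 0 3*M 2 1 + (-1)*k^4*Complex.exp (Complex.I*k*(γ:ℂ))*Complex.exp (-(k*(γ:ℂ)))*Complex.I*M 0 1*M 2 3 + k^5*Complex.exp (Complex.I*k*(γ:ℂ))*Complex.exp (-(k*(γ:ℂ)))*M 0 3*M 1 1 + (-1)*k^5*Complex.exp (Complex.I*k*(γ:ℂ))*Complex.exp (-(k*(γ:ℂ)))*M 0 1*M 1 3 + k^5*Complex.exp (Complex.I*k*(γ:ℂ))*Complex.exp (-(k*(γ:ℂ)))*Complex.I*M 0 3*M 1 1 + (-1)*k^5*Complex.exp (Complex.I*k*(γ:ℂ))*Complex.exp (-(k*(γ:ℂ)))*Complex.I*M 0 1*M 1 3) * Complex.I_sq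
end

section
/- Let n ∈ ℕ and let Q, Q̇, X, Y : ℝ → Matrix (Fin n) (Fin n) ℂ be such that for every x ∈ ℝ: HasDerivAt X (Q(x)·X(x)) x, HasDerivAt Y (Q(x)·Y(x) + Q̇(x)·X(x)) x, and X(x) is invertible. Then for every x ∈ ℝ the function Ω(t) = X(t)⁻¹·Y(t) satisfies HasDerivAt Ω (X(x)⁻¹·Q̇(x)·X(x)) x. -/
attribute [local instance] Matrix.linftyOpNormedRing Matrix.linftyOpNormedAlgebra

/-!
With `Ω = X⁻¹ Y`, the product rule and `(X⁻¹)' = -X⁻¹ X' X⁻¹` give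
`Ω' = -X⁻¹ Q X X⁻¹ Y + X⁻¹ (Q Y + Q̇ X)`, where the two `Q`-terms cancel because `X X⁻¹ = 1`.
-/

section NormedAlgebra

variable {𝕜 R : Type*} [NontriviallyNormedField 𝕜] [NormedRing R] [HasSummableGeomSeries R]
  [NormedAlgebra 𝕜 R]

theorem HasDerivAt.ringInverse {f : 𝕜 → R} {f' : R} {x : 𝕜} (hf : HasDerivAt f f' x)
    (hx : IsUnit (f x)) :
    HasDerivAt (fun t => Ring.inverse (f t))
      (-(Ring.inverse (f x) * f' * Ring.inverse (f x))) x := by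
  obtain ⟨u, hu⟩ := hx
  have h := (hu ▸ hasFDerivAt_ringInverse (𝕜 := 𝕜) u).comp_hasDerivAt x hf
  simpa [← hu, Function.comp_def] using h

theorem HasDerivAt.ringInverse_mul_of_linear {f g : 𝕜 → R} {q r : R} {x : 𝕜}
    (hf : HasDerivAt f (q * f x) x) (hg : HasDerivAt g (q * g x + r * f x) x)
    (hx : IsUnit (f x)) :
    HasDerivAt (fun t => Ring.inverse (f t) * g t) (Ring.inverse (f x) * r * f x) x := by
  convert (hf.ringInverse hx).fun_mul hg using 1
  have hcancel : f x * Ring.inverse (f x) = 1 := Ring.mul_inverse_cancel _ hx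
  calc Ring.inverse (f x) * r * f x
      = -(Ring.inverse (f x) * q * (f x * Ring.inverse (f x)) * g x)
          + Ring.inverse (f x) * (q * g x + r * f x) := by rw [hcancel]; noncomm_ring
    _ = _ := by noncomm_ring

end NormedAlgebra

/-- The identity `Ω' = X⁻¹ Q̇ X` of the paper's Lemma 2.2: if `X' = Q X`,
`Y' = Q Y + Q̇ X`, and every `X(x)` is invertible, then `Ω = X⁻¹ Y` satisfies
`HasDerivAt Ω (X(x)⁻¹ Q̇(x) X(x)) x` for every `x`. -/
theorem deriv_inv_mul_of_linear_system
    (n : ℕ) (Q Qdot X Y : ℝ → Matrix (Fin n) (Fin n) ℂ)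
    (hX : ∀ x : ℝ, HasDerivAt X (Q x * X x) x)
    (hY : ∀ x : ℝ, HasDerivAt Y (Q x * Y x + Qdot x * X x) x)
    (hinv : ∀ x : ℝ, IsUnit (X x).det) :
    ∀ x : ℝ, HasDerivAt (fun t => (X t)⁻¹ * Y t) ((X x)⁻¹ * Qdot x * X x) x := by
  intro x
  simp only [Matrix.nonsing_inv_eq_ringInverse]
  exact (hX x).ringInverse_mul_of_linear (hY x) ((X x).isUnit_iff_isUnit_det.2 (hinv x))
end
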